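/- Let ξ ∈ ℝ³, ζ ∈ ℝ³ \ {0} and w ∈ ℂ³. Define v := (|ζ|² − i ξ·ζ)^{−1} ( w − |ζ|^{−2} (ζ·w) ζ ) and p := −i |ζ|^{−2} (ζ·w). Then |ζ|² − i ξ·ζ ≠ 0, and the pair (v, p) satisfies (|ζ|² − i ξ·ζ) v + i p ζ = w and ζ · v = 0. -/

import Mathlib

open MeasureTheory
open scoped ENNReal

noncomputable section

abbrev E3 := EuclideanSpace ℝ (Fin 3)
abbrev C3 := EuclideanSpace ℂ (Fin 3)

/-- The bilinear pairing `ζ·y = ∑ ζⱼ yⱼ` on `ℝ³`. -/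
def dotR (x y : E3) : ℝ := ∑ j : Fin 3, x j * y j

/-- The bilinear pairing `ζ·w = ∑ ζⱼ wⱼ` (no conjugation) of a real and a complex vector. -/
def dotC (x : E3) (w : C3) : ℂ := ∑ j : Fin 3, (x j : ℂ) * w j

/-- The complexification of a real vector. -/
def toC (x : E3) : C3 := (WithLp.equiv 2 (Fin 3 → ℂ)).symm fun j => (x j : ℂ)

/-- The Oseen symbol `|ζ|² - i ξ·ζ`. -/
def oseenC (ξ ζ : E3) : ℂ := (‖ζ‖ ^ 2 : ℂ) - Complex.I * (dotR ξ ζ : ℂ)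

/-- `v = (|ζ|² - iξ·ζ)⁻¹ (w - |ζ|^{-2}(ζ·w)ζ)`. -/
def oseenV (ξ ζ : E3) (w : C3) : C3 :=
  (oseenC ξ ζ)⁻¹ • (w - ((‖ζ‖ ^ 2 : ℂ))⁻¹ • dotC ζ w • toC ζ)

/-- `p = -i |ζ|^{-2} (ζ·w)`. -/
def oseenP (ζ : E3) (w : C3) : ℂ := -Complex.I * ((‖ζ‖ ^ 2 : ℂ))⁻¹ * dotC ζ w

lemma dotC_self (ζ : E3) : dotC ζ (toC ζ) = (‖ζ‖ ^ 2 : ℂ) := by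
  have h : ‖ζ‖ ^ 2 = ∑ j : Fin 3, ζ j ^ 2 := by
    rw [EuclideanSpace.norm_eq, Real.sq_sqrt (by positivity)]
    simp [sq]
  simp only [dotC, toC, WithLp.equiv_symm_apply, PiLp.toLp_apply]
  have h2 : ((‖ζ‖ : ℂ)) ^ 2 = ((‖ζ‖ ^ 2 : ℝ) : ℂ) := by push_cast; rfl
  rw [h2, h]
  push_cast
  exact Finset.sum_congr rfl fun j _ => (sq _).symm

lemma dotC_sub (x : E3) (a b : C3) : dotC x (a - b) = dotC x a - dotC x b := by
  simp [dotC, mul_sub, Finset.sum_sub_distrib]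

lemma dotC_smul (x : E3) (c : ℂ) (a : C3) : dotC x (c • a) = c * dotC x a := by
  simp only [dotC, Finset.mul_sum, PiLp.smul_apply, smul_eq_mul]
  exact Finset.sum_congr rfl fun j _ => by ring

/-- The resolvent formula for the classical Oseen system on the Fourier side: for `ζ ≠ 0`,
the symbol `|ζ|² - iξ·ζ` is nonzero and the pair `(v,p)` satisfies
`(|ζ|² - iξ·ζ) v + i p ζ = w` and `ζ·v = 0`. -/
theorem stmt14 (ξ ζ : E3) (hζ : ζ ≠ 0) (w : C3) :
    oseenC ξ ζ ≠ 0 ∧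
    oseenC ξ ζ • oseenV ξ ζ w + (Complex.I * oseenP ζ w) • toC ζ = w ∧
    dotC ζ (oseenV ξ ζ w) = 0 := by
  have hn0 : ‖ζ‖ ≠ 0 := norm_ne_zero_iff.mpr hζ
  have hn : ((‖ζ‖ : ℂ) ^ 2) ≠ 0 := pow_ne_zero 2 (by exact_mod_cast hn0)
  have hO : oseenC ξ ζ ≠ 0 := by
    intro h
    have hre : (oseenC ξ ζ).re = ‖ζ‖ ^ 2 := by
      simp [oseenC, pow_two]
    rw [h] at hre
    simp at hre
    exact hn0 (pow_eq_zero_iff two_ne_zero |>.mp hre.symm)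
  refine ⟨hO, ?_, ?_⟩
  · rw [oseenV, smul_smul, mul_inv_cancel₀ hO, one_smul, oseenP, smul_smul]
    have h1 : Complex.I * (-Complex.I * ((‖ζ‖ ^ 2 : ℂ))⁻¹ * dotC ζ w) =
        ((‖ζ‖ : ℂ) ^ 2)⁻¹ * dotC ζ w := by
      push_cast
      rw [← mul_assoc, ← mul_assoc, mul_neg, Complex.I_mul_I, neg_neg, one_mul]
    rw [h1, sub_add_cancel]
  · rw [oseenV, dotC_smul, dotC_sub, dotC_smul, dotC_smul, dotC_self]
    rw [mul_comm (dotC ζ w) _, inv_mul_cancel_left₀ hn, sub_self, mul_zero]
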